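/- For every odd integer n ≥ 3, there exists a 2-fold graph covering from the Hecke graph G4(n) onto the Farey graph G3(n). Likewise, for every integer n ≥ 2 not divisible by 3, there exists a 2-fold graph covering from the Hecke graph G6(n) onto G3(n). -/

import Mathlib

/-- The equivalence relation identifying `(a,c)` with `(-a,-c)` on the set of pairs of
elements of `ℤ/nℤ` generating the unit ideal. -/
def FareySetoid (n : ℕ) : Setoid {p : ZMod n × ZMod n // IsCoprime p.1 p.2} where
  r p q := p.1 = q.1 ∨ p.1 = -q.1
  iseqv := by
    constructor
    · intro p; exact Or.inl rfl
    · rintro p q (h | h)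
      · exact Or.inl h.symm
      · right; rw [h, neg_neg]
    · rintro p q s (h1 | h1) (h2 | h2)
      · exact Or.inl (h1.trans h2)
      · right; rw [h1, h2]
      · right; rw [h1, h2]
      · left; rw [h1, h2, neg_neg]

/-- The vertices of the Farey graph `G3(n)`: classes `[a:c]` of pairs `(a,c) ∈ (ℤ/nℤ)²`
generating the unit ideal, with `(a,c) ~ (-a,-c)`. -/
def FareyVertex (n : ℕ) := Quotient (FareySetoid n)

/-- The vertex `[a:c]` of the Farey graph. -/
def FareyVertex.mk (n : ℕ) (a c : ZMod n) (h : IsCoprime a c) : FareyVertex n :=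
  Quotient.mk (FareySetoid n) ⟨(a, c), h⟩

/-- The Farey graph `G3(n)`: vertices `[a:c]` and `[b:d]` are adjacent iff
`ad - bc ≡ ±1 (mod n)`. -/
def FareyGraph (n : ℕ) : SimpleGraph (FareyVertex n) where
  Adj u v := u ≠ v ∧ ∃ a c b d : ZMod n,
    (∃ h, u = FareyVertex.mk n a c h) ∧ (∃ h, v = FareyVertex.mk n b d h) ∧
    (a * d - b * c = 1 ∨ a * d - b * c = -1)
  symm := ⟨by
    rintro u v ⟨hne, a, c, b, d, hu, hv, h⟩
    refine ⟨hne.symm, b, d, a, c, hv, hu, ?_⟩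
    rcases h with h | h
    · right; linear_combination -h
    · left; linear_combination -h⟩
  loopless := ⟨fun u h => h.1 rfl⟩

instance (n : ℕ) [NeZero n] : Finite (FareyVertex n) := Quotient.finite _

/-- A pair of integers `b, d` with `gcd(b, d, n) = 1` yields a pair generating the unit
ideal of `ℤ/nℤ`. -/
lemma isCoprime_zmod_of_gcd {n : ℕ} {b d : ℤ} (h : Int.gcd b (Int.gcd d n) = 1) :
    IsCoprime (b : ZMod n) (d : ZMod n) := by
  obtain ⟨u, v, huv⟩ := Int.isCoprime_iff_gcd_eq_one.mpr h
  have hgcd : ((Int.gcd d n : ℕ) : ℤ) = d * Int.gcdA d n + n * Int.gcdB d n :=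
    Int.gcd_eq_gcd_ab d (n : ℤ)
  refine ⟨(u : ZMod n), ((v * Int.gcdA d (n : ℤ) : ℤ) : ZMod n), ?_⟩
  have huv' : u * b + (v * Int.gcdA d (n : ℤ)) * d + (v * Int.gcdB d (n : ℤ)) * n = 1 := by
    rw [← huv, hgcd]; ring
  have := congrArg (fun z : ℤ => (z : ZMod n)) huv'
  push_cast at this
  rw [ZMod.natCast_self] at this
  push_cast
  linear_combination this
/-- The vertex `[b:d]` of `G3(n)` determined by integers `b`, `d` with `gcd(b,d,n) = 1`. -/
def FareyVertex.ofInt (n : ℕ) (b d : ℤ) (h : Int.gcd b (Int.gcd d n) = 1) : FareyVertex n :=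
  FareyVertex.mk n (b : ZMod n) (d : ZMod n) (isCoprime_zmod_of_gcd h)

/-- The number of vertices of the Farey graph `G3(n)`. -/
noncomputable def fareyCard (n : ℕ) : ℕ := Nat.card (FareyVertex n)

/-- The characteristic polynomial of the (real) adjacency matrix of the Farey
graph `G3(n)` (junk value `1` for `n = 0`). -/
noncomputable def fareyCharpoly (n : ℕ) : Polynomial ℝ :=
  if h : n = 0 then 1
  else
    letI : NeZero n := ⟨h⟩
    letI : Fintype (FareyVertex n) := Fintype.ofFinite _
    letI : DecidableEq (FareyVertex n) := Classical.decEq _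
    letI : DecidableRel (FareyGraph n).Adj := Classical.decRel _
    Matrix.charpoly ((FareyGraph n).adjMatrix ℝ)

/-- The spectrum of the Farey graph `G3(n)`: the multiset of real roots, with
multiplicity, of the characteristic polynomial of its adjacency matrix. -/
noncomputable def sp3 (n : ℕ) : Multiset ℝ := (fareyCharpoly n).roots

open Sum in
/-- The Hecke graph of level `n` with parameter `t` (the graphs `G4(n)` and `G6(n)` are
obtained for `t = 2` and `t = 3` respectively): the vertex set consists of two disjoint
copies of the vertices of `G3(n)` (even vertices `inl [a:c]` and odd vertices
`inr [b:d]`); an even vertex `[a:c]` and an odd vertex `[b:d]` are adjacent iff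
`ad - t·bc ≡ ±1 (mod n)`, and no two vertices of the same parity are adjacent. -/
def HeckeGraph (n : ℕ) (t : ℤ) : SimpleGraph (FareyVertex n ⊕ FareyVertex n) where
  Adj u v :=
    (∃ a c b d : ZMod n,
      (∃ h, u = inl (FareyVertex.mk n a c h)) ∧ (∃ h, v = inr (FareyVertex.mk n b d h)) ∧
      (a * d - (t : ZMod n) * (b * c) = 1 ∨ a * d - (t : ZMod n) * (b * c) = -1)) ∨
    (∃ a c b d : ZMod n,
      (∃ h, v = inl (FareyVertex.mk n a c h)) ∧ (∃ h, u = inr (FareyVertex.mk n b d h)) ∧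
      (a * d - (t : ZMod n) * (b * c) = 1 ∨ a * d - (t : ZMod n) * (b * c) = -1))
  symm := ⟨by
    rintro u v (h | h)
    · exact Or.inr h
    · exact Or.inl h⟩
  loopless := ⟨by
    rintro u (⟨a, c, b, d, ⟨h₁, hu⟩, ⟨h₂, hv⟩, -⟩ | ⟨a, c, b, d, ⟨h₁, hv⟩, ⟨h₂, hu⟩, -⟩) <;>
      rw [hu] at hv
    · exact inl_ne_inr hv
    · exact inr_ne_inl hv⟩

/-- The characteristic polynomial of the (real) adjacency matrix of the Hecke graph of
level `n` with parameter `t` (junk value `1` for `n = 0`). -/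
noncomputable def heckeCharpoly (n : ℕ) (t : ℤ) : Polynomial ℝ :=
  if h : n = 0 then 1
  else
    letI : NeZero n := ⟨h⟩
    letI : Fintype (FareyVertex n) := Fintype.ofFinite _
    letI : DecidableEq (FareyVertex n ⊕ FareyVertex n) := Classical.decEq _
    letI : DecidableRel (HeckeGraph n t).Adj := Classical.decRel _
    Matrix.charpoly ((HeckeGraph n t).adjMatrix ℝ)

/-- The spectrum of the Hecke graph of level `n` with parameter `t`: the multiset of real
roots, with multiplicity, of the characteristic polynomial of its adjacency matrix. -/
noncomputable def spHecke (n : ℕ) (t : ℤ) : Multiset ℝ := (heckeCharpoly n t).roots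


/-! Since `t` is invertible mod `n`, rescaling every odd vertex `[b:d]` to `[t·b:d]` turns the
Hecke condition `ad - t·bc ≡ ±1` into the Farey condition `ad - bc ≡ ±1`. Hence the Hecke graph
is isomorphic to the bipartite double cover of the Farey graph, and the projection of any
bipartite double cover onto its base graph is a 2-fold covering. -/

open Sum

namespace SimpleGraph

variable {U V V' W : Type*}

structure IsCovering (H : SimpleGraph V) (G : SimpleGraph W) (φ : V → W) (k : ℕ) : Prop where
  surjective : Function.Surjective φ
  map_adj : ∀ ⦃u v⦄, H.Adj u v → G.Adj (φ u) (φ v)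
  card_fiber : ∀ w, Nat.card (φ ⁻¹' {w}) = k
  bijOn_neighborSet : ∀ v, Set.BijOn φ (H.neighborSet v) (G.neighborSet (φ v))

theorem Iso.bijOn_neighborSet {G : SimpleGraph V} {G' : SimpleGraph V'} (e : G ≃g G') (v : V) :
    Set.BijOn e (G.neighborSet v) (G'.neighborSet (e v)) := by
  refine ⟨fun w hw => e.map_adj_iff.mpr hw, e.injective.injOn, fun w' hw' => ?_⟩
  refine ⟨e.symm w', ?_, e.apply_symm_apply w'⟩
  rw [mem_neighborSet, ← e.map_adj_iff, e.apply_symm_apply]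
  exact hw'

theorem IsCovering.comp_iso {H' : SimpleGraph V} {G : SimpleGraph W} {φ : V → W} {k : ℕ}
    (hφ : H'.IsCovering G φ k) {H : SimpleGraph U} (e : H ≃g H') :
    H.IsCovering G (φ ∘ e) k where
  surjective := hφ.surjective.comp e.surjective
  map_adj _ _ h := hφ.map_adj (e.map_adj_iff.mpr h)
  card_fiber w := by
    rw [Set.preimage_comp, Nat.card_preimage_of_injective e.injective (by simp), hφ.card_fiber]
  bijOn_neighborSet v := (hφ.bijOn_neighborSet (e v)).comp (e.bijOn_neighborSet v)

theorem bipartiteDoubleCover_isCovering (G : SimpleGraph V) :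
    G.bipartiteDoubleCover.IsCovering G (Sum.elim id id) 2 where
  surjective v := ⟨inl v, rfl⟩
  map_adj u v h := by
    rcases u with u | u <;> rcases v with v | v <;> simp_all
  card_fiber w := by
    have : Sum.elim id id ⁻¹' {w} = {inl w, inr w} := by
      ext (v | v) <;> simp [eq_comm]
    rw [this, Nat.card_coe_set_eq, Set.ncard_pair inl_ne_inr]
  bijOn_neighborSet v := by
    refine ⟨?_, ?_, ?_⟩
    · rintro w hw
      rcases v with v | v <;> rcases w with w | w <;> simp_all
    · rintro (w₁ | w₁) h₁ (w₂ | w₂) h₂ h <;> rcases v with v | v <;> simp_all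
    · rcases v with v | v <;> intro w hw
      exacts [⟨inr w, hw, rfl⟩, ⟨inl w, hw, rfl⟩]

end SimpleGraph

namespace FareyVertex

variable {n : ℕ}

theorem mk_eq_mk_iff {a c b d : ZMod n} {h : IsCoprime a c} {h' : IsCoprime b d} :
    mk n a c h = mk n b d h' ↔ (a = b ∧ c = d) ∨ (a = -b ∧ c = -d) := by
  change Quotient.mk (FareySetoid n) _ = Quotient.mk (FareySetoid n) _ ↔ _
  rw [Quotient.eq]
  change (_ = _ ∨ _ = _) ↔ _
  simp [Prod.ext_iff]

theorem mk_ne_mk_of_det [Nontrivial (ZMod n)] {a c b d : ZMod n} {h : IsCoprime a c}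
    {h' : IsCoprime b d} (hdet : a * d - b * c = 1 ∨ a * d - b * c = -1) :
    mk n a c h ≠ mk n b d h' := by
  intro he
  have hzero : a * d - b * c = 0 := by
    rcases mk_eq_mk_iff.mp he with ⟨rfl, rfl⟩ | ⟨rfl, rfl⟩ <;> ring
  rcases hdet with hdet | hdet <;> simp [hzero] at hdet

instance : MulAction (ZMod n)ˣ (FareyVertex n) where
  smul u := Quotient.map
    (fun p => ⟨((u : ZMod n) * p.1.1, p.1.2),
      (isCoprime_mul_unit_left_left u.isUnit _ _).mpr p.2⟩)
    (by
      rintro ⟨⟨a, c⟩, _⟩ ⟨⟨b, d⟩, _⟩ (h | h) <;> obtain ⟨rfl, rfl⟩ := Prod.ext_iff.mp h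
      exacts [Or.inl rfl, Or.inr (by simp)])
  one_smul x := by
    induction x using Quotient.ind
    exact Quotient.sound (Or.inl (by simp))
  mul_smul u v x := by
    induction x using Quotient.ind
    exact Quotient.sound (Or.inl (by simp [mul_assoc]))

theorem smul_mk (u : (ZMod n)ˣ) (a c : ZMod n) (h : IsCoprime a c) :
    u • mk n a c h = mk n (u * a) c ((isCoprime_mul_unit_left_left u.isUnit _ _).mpr h) :=
  rfl

end FareyVertex

section HeckeGraph

variable {n : ℕ} {t : ℤ}

theorem heckeGraph_not_adj_inl_inl (x x' : FareyVertex n) :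
    ¬(HeckeGraph n t).Adj (inl x) (inl x') := by
  rintro (⟨_, _, _, _, _, ⟨_, h⟩, _⟩ | ⟨_, _, _, _, _, ⟨_, h⟩, _⟩) <;> simp at h

theorem heckeGraph_not_adj_inr_inr (y y' : FareyVertex n) :
    ¬(HeckeGraph n t).Adj (inr y) (inr y') := by
  rintro (⟨_, _, _, _, ⟨_, h⟩, _⟩ | ⟨_, _, _, _, ⟨_, h⟩, _⟩) <;> simp at h

theorem heckeGraph_adj_inl_inr_iff [Nontrivial (ZMod n)] (u : (ZMod n)ˣ)
    (hu : (u : ZMod n) = t) {x y : FareyVertex n} :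
    (HeckeGraph n t).Adj (inl x) (inr y) ↔ (FareyGraph n).Adj x (u • y) := by
  constructor
  · rintro (⟨a, c, b, d, ⟨ha, hx⟩, ⟨hb, hy⟩, hdet⟩ | ⟨_, _, _, _, _, ⟨_, hy⟩, _⟩)
    · cases hx; cases hy
      have hdet' : a * d - u * b * c = 1 ∨ a * d - u * b * c = -1 := by
        rwa [mul_assoc, hu]
      exact ⟨FareyVertex.mk_ne_mk_of_det hdet', a, c, u * b, d, ⟨ha, rfl⟩, ⟨_, rfl⟩, hdet'⟩
    · simp at hy
  · rintro ⟨-, a, c, b, d, ⟨ha, rfl⟩, ⟨hb, hy⟩, hdet⟩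
    have hy' : y = FareyVertex.mk n (↑u⁻¹ * b) d
        ((isCoprime_mul_unit_left_left u⁻¹.isUnit _ _).mpr hb) := by
      rw [← FareyVertex.smul_mk u⁻¹ b d hb, ← hy, inv_smul_smul]
    have hcancel : a * d - t * (↑u⁻¹ * b * c) = a * d - b * c := by
      rw [← hu]; linear_combination -(b * c) * u.mul_inv
    exact Or.inl ⟨a, c, ↑u⁻¹ * b, d, ⟨ha, rfl⟩, ⟨_, congrArg inr hy'⟩, hcancel ▸ hdet⟩

def heckeGraphIsoBipartiteDoubleCover [Nontrivial (ZMod n)] (u : (ZMod n)ˣ)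
    (hu : (u : ZMod n) = t) : HeckeGraph n t ≃g (FareyGraph n).bipartiteDoubleCover where
  toEquiv := Equiv.sumCongr (Equiv.refl _) (MulAction.toPerm u)
  map_rel_iff' {v w} := by
    rcases v with x | y <;> rcases w with x' | y'
    · simpa using (heckeGraph_not_adj_inl_inl x x').elim
    · simpa using (heckeGraph_adj_inl_inr_iff u hu).symm
    · rw [SimpleGraph.adj_comm, SimpleGraph.adj_comm (HeckeGraph n t)]
      simpa using (heckeGraph_adj_inl_inr_iff u hu).symm
    · simpa using (heckeGraph_not_adj_inr_inr y y').elim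

theorem exists_isCovering_heckeGraph (hn : n ≠ 1) (ht : IsUnit (t : ZMod n)) :
    ∃ φ, (HeckeGraph n t).IsCovering (FareyGraph n) φ 2 := by
  have := ZMod.nontrivial_iff.mpr hn
  exact ⟨_, (FareyGraph n).bipartiteDoubleCover_isCovering.comp_iso
    (heckeGraphIsoBipartiteDoubleCover ht.unit ht.unit_spec)⟩

end HeckeGraph

/-- For every odd `n ≥ 3` there is a 2-fold graph covering from the
Hecke graph `G4(n) = HeckeGraph n 2` onto the Farey graph `G3(n)`; likewise, for every
`n ≥ 2` not divisible by `3`, from `G6(n) = HeckeGraph n 3` onto `G3(n)`. -/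
theorem stmt16 :
    (∀ n : ℕ, 3 ≤ n → Odd n →
      ∃ φ : FareyVertex n ⊕ FareyVertex n → FareyVertex n,
        Function.Surjective φ ∧
        (∀ ⦃u v⦄, (HeckeGraph n 2).Adj u v → (FareyGraph n).Adj (φ u) (φ v)) ∧
        (∀ v : FareyVertex n, Nat.card (φ ⁻¹' {v}) = 2) ∧
        (∀ w, Set.BijOn φ ((HeckeGraph n 2).neighborSet w) ((FareyGraph n).neighborSet (φ w)))) ∧
    (∀ n : ℕ, 2 ≤ n → ¬ (3 ∣ n) →
      ∃ φ : FareyVertex n ⊕ FareyVertex n → FareyVertex n,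
        Function.Surjective φ ∧
        (∀ ⦃u v⦄, (HeckeGraph n 3).Adj u v → (FareyGraph n).Adj (φ u) (φ v)) ∧
        (∀ v : FareyVertex n, Nat.card (φ ⁻¹' {v}) = 2) ∧
        (∀ w, Set.BijOn φ ((HeckeGraph n 3).neighborSet w) ((FareyGraph n).neighborSet (φ w)))) := by
  refine ⟨fun n hn hodd => ?_, fun n hn h3 => ?_⟩
  · have hunit : IsUnit ((2 : ℤ) : ZMod n) := by
      simpa using ZMod.isUnit_prime_of_not_dvd Nat.prime_two hodd.not_two_dvd_nat
    obtain ⟨φ, hφ⟩ := exists_isCovering_heckeGraph (by omega) hunit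
    exact ⟨φ, hφ.surjective, hφ.map_adj, hφ.card_fiber, hφ.bijOn_neighborSet⟩
  · have hunit : IsUnit ((3 : ℤ) : ZMod n) := by
      simpa using ZMod.isUnit_prime_of_not_dvd Nat.prime_three h3
    obtain ⟨φ, hφ⟩ := exists_isCovering_heckeGraph (by omega) hunit
    exact ⟨φ, hφ.surjective, hφ.map_adj, hφ.card_fiber, hφ.bijOn_neighborSet⟩
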